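/- arXiv:1503.01346 — 4 statements merged into one kernel-verified Lean document; each statement's English description precedes it below -/
import Mathlib

section
/- Let M be a von Neumann algebra acting on a complex Hilbert space H and let Δ : M → M be a weak-2-local derivation on M. Then for every finite family p₁, …, pₙ of mutually orthogonal projections in M (pᵢpⱼ = 0 for i ≠ j) and all complex numbers λ₁, …, λₙ, one has Δ(∑ⱼ λⱼ pⱼ) = ∑ⱼ λⱼ Δ(pⱼ). -/
variable {H : Type*} [NormedAddCommGroup H] [InnerProductSpace ℂ H] [CompleteSpace H]

/-- A (not necessarily linear) map `Δ` on a von Neumann algebra `M` acting on a complex Hilbert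
space is a weak-2-local derivation if for all `a b ∈ M` and every continuous linear functional
`φ` on `M` there is a derivation `D` on `M` (a `ℂ`-linear map satisfying the Leibniz rule) such
that `φ (Δ a) = φ (D a)` and `φ (Δ b) = φ (D b)`. -/
def IsWeak2LocalDerivation (M : VonNeumannAlgebra H)
    (Δ : M.toStarSubalgebra → M.toStarSubalgebra) : Prop :=
  ∀ (a b : M.toStarSubalgebra) (φ : M.toStarSubalgebra →L[ℂ] ℂ),
    ∃ D : M.toStarSubalgebra →ₗ[ℂ] M.toStarSubalgebra,
      (∀ x y, D (x * y) = D x * y + x * D y) ∧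
      φ (Δ a) = φ (D a) ∧ φ (Δ b) = φ (D b)

/-- The linear map `x ↦ c * x * d` on a von Neumann algebra. -/
noncomputable def cornerLM (M : VonNeumannAlgebra H) (c d : M.toStarSubalgebra) :
    M.toStarSubalgebra →ₗ[ℂ] M.toStarSubalgebra where
  toFun := fun x => c * x * d
  map_add' := by intro x y; noncomm_ring
  map_smul' := by intro m x; simp [mul_smul_comm, smul_mul_assoc]

/-- The continuous functional `x ↦ φ (c * x * d)`. -/
noncomputable def corner (M : VonNeumannAlgebra H) (φ : M.toStarSubalgebra →L[ℂ] ℂ)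
    (c d : M.toStarSubalgebra) : M.toStarSubalgebra →L[ℂ] ℂ :=
  φ.comp { toLinearMap := cornerLM M c d,
           cont := (continuous_const.mul continuous_id).mul continuous_const }

theorem corner_apply (M : VonNeumannAlgebra H) (φ : M.toStarSubalgebra →L[ℂ] ℂ)
    (c d x : M.toStarSubalgebra) : corner M φ c d x = φ (c * x * d) := rfl

/-- If `P` is idempotent and `u * P = 0`, `P * v = 0`, then `u * D P * v = 0` for any
derivation `D`. -/
theorem deriv_corner_zero (M : VonNeumannAlgebra H)
    (D : M.toStarSubalgebra →ₗ[ℂ] M.toStarSubalgebra)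
    (hD : ∀ x y, D (x * y) = D x * y + x * D y) (P u v : M.toStarSubalgebra)
    (hp : P * P = P) (hu : u * P = 0) (hv : P * v = 0) : u * D P * v = 0 := by
  have hd := hD P P
  rw [hp] at hd
  calc u * D P * v = u * (D P * P + P * D P) * v := by rw [← hd]
    _ = u * D P * (P * v) + u * P * (D P * v) := by noncomm_ring
    _ = 0 := by rw [hu, hv]; simp

/-- `P * D P * P = 0` for an idempotent `P` and a derivation `D`. -/
theorem deriv_sandwich (M : VonNeumannAlgebra H)
    (D : M.toStarSubalgebra →ₗ[ℂ] M.toStarSubalgebra)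
    (hD : ∀ x y, D (x * y) = D x * y + x * D y) (P : M.toStarSubalgebra)
    (hp : P * P = P) : P * D P * P = 0 := by
  have hd := hD P P
  rw [hp] at hd
  have h : P * D P * P = P * D P * P + P * D P * P := by
    calc P * D P * P = P * (D P * P + P * D P) * P := by rw [← hd]
      _ = P * D P * (P * P) + (P * P) * (D P * P) := by noncomm_ring
      _ = P * D P * P + P * D P * P := by rw [hp]; noncomm_ring
  exact (left_eq_add.mp h)

/-- Cross-corner identity for a derivation and orthogonal idempotents. -/
theorem deriv_cross (M : VonNeumannAlgebra H)
    (D : M.toStarSubalgebra →ₗ[ℂ] M.toStarSubalgebra)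
    (hD : ∀ x y, D (x * y) = D x * y + x * D y) (P Q : M.toStarSubalgebra)
    (hP : P * P = P) (hQ : Q * Q = Q) (hPQ : P * Q = 0) :
    P * D P * Q + P * D Q * Q = 0 := by
  have hd := hD P Q
  rw [hPQ, map_zero] at hd
  have h2 : P * (D P * Q + P * D Q) * Q = 0 := by rw [← hd]; simp
  have e1 : P * D P * (Q * Q) + P * P * (D Q * Q) = 0 := by
    calc P * D P * (Q * Q) + P * P * (D Q * Q)
        = P * (D P * Q + P * D Q) * Q := by noncomm_ring
      _ = 0 := h2
  rw [hQ, hP] at e1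
  calc P * D P * Q + P * D Q * Q = P * D P * Q + P * (D Q * Q) := by
        rw [mul_assoc P (D Q) Q]
    _ = 0 := e1

set_option maxHeartbeats 1000000 in
/-- A weak-2-local derivation on a von Neumann algebra is linear on finite complex linear
combinations of mutually orthogonal projections. -/
theorem weak2LocalDerivation_sum_smul_proj (M : VonNeumannAlgebra H)
    (Δ : M.toStarSubalgebra → M.toStarSubalgebra) (hΔ : IsWeak2LocalDerivation M Δ)
    (N : ℕ) (p : Fin N → M.toStarSubalgebra)
    (hproj : ∀ j, star (p j) = p j ∧ p j * p j = p j)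
    (horth : ∀ i j, i ≠ j → p i * p j = 0) (l : Fin N → ℂ) :
    Δ (∑ j, l j • p j) = ∑ j, l j • Δ (p j) := by
  classical
  letI : NormedSpace ℂ M.toStarSubalgebra :=
    (inferInstance : NormedAlgebra ℂ M.toStarSubalgebra).toNormedSpace
  set z : M.toStarSubalgebra := ∑ j, l j • p j with hz
  set e : M.toStarSubalgebra := ∑ j, p j with he
  set q : M.toStarSubalgebra := 1 - e with hq
  have hpp : ∀ j, p j * p j = p j := fun j => (hproj j).2
  have hep : ∀ j, e * p j = p j := by
    intro j
    rw [he, Finset.sum_mul, Finset.sum_eq_single j (fun i _ hij => horth i j hij) (fun h => absurd (Finset.mem_univ j) h)]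
    exact hpp j
  have hpe : ∀ j, p j * e = p j := by
    intro j
    rw [he, Finset.mul_sum,
      Finset.sum_eq_single j (fun i _ hij => horth j i (Ne.symm hij)) (fun h => absurd (Finset.mem_univ j) h)]
    exact hpp j
  have hqp : ∀ j, q * p j = 0 := by
    intro j; rw [hq, sub_mul, one_mul, hep, sub_self]
  have hpq : ∀ j, p j * q = 0 := by
    intro j; rw [hq, mul_sub, mul_one, hpe, sub_self]
  have hee : e * e = e := by
    calc e * e = ∑ j, p j * e := by rw [he, Finset.sum_mul]
      _ = ∑ j, p j := by simp only [hpe]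
      _ = e := he.symm
  have hqq : q * q = q := by
    have h1 : (1 - e) * (1 - e) = 1 - e - e + e * e := by noncomm_ring
    rw [hee] at h1
    rw [hq, h1]; abel
  -- corner family indexed by `Option (Fin N)`
  set P : Option (Fin N) → M.toStarSubalgebra := fun o => o.elim q p with hPdef
  have hPidem : ∀ a, P a * P a = P a := by rintro (_ | j); exacts [hqq, hpp j]
  have hPleft : ∀ (a : Option (Fin N)) (j : Fin N), a ≠ some j → P a * p j = 0 := by
    rintro (_ | k) j h
    · exact hqp j
    · exact horth k j (by simpa using h)
  have hPright : ∀ (a : Option (Fin N)) (j : Fin N), a ≠ some j → p j * P a = 0 := by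
    rintro (_ | k) j h
    · exact hpq j
    · exact horth j k (fun hk => h (by rw [hk]))
  have hPsum : (∑ a : Option (Fin N), P a) = 1 := by
    rw [Fintype.sum_option]
    have h2 : (∑ j, P (some j)) = e := he.symm
    show q + (∑ j, P (some j)) = 1
    rw [h2, hq]; abel
  -- corner of D z
  have hDz : ∀ (D : M.toStarSubalgebra →ₗ[ℂ] M.toStarSubalgebra),
      D z = ∑ j, l j • D (p j) := by
    intro D
    rw [hz, map_sum]
    simp only [map_smul]
  -- main argument: all continuous functionals agree
  refine (NormedSpace.eq_iff_forall_dual_eq ℂ).mpr fun φ => ?_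
  -- the corner expansion of `φ (D z)`
  have hφDz : ∀ (D : M.toStarSubalgebra →ₗ[ℂ] M.toStarSubalgebra) (c d : M.toStarSubalgebra),
      φ (c * D z * d) = ∑ j, l j * φ (c * D (p j) * d) := by
    intro D c d
    have h1 : c * D z * d = ∑ j, l j • (c * D (p j) * d) := by
      rw [hDz D]
      rw [Finset.mul_sum, Finset.sum_mul]
      simp only [mul_smul_comm, smul_mul_assoc]
    rw [h1, map_sum]
    simp only [map_smul, smul_eq_mul]
  -- single-point vanishing corners of Δ
  have hΔp0 : ∀ (c d : M.toStarSubalgebra) (j : Fin N),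
      c * p j = 0 → p j * d = 0 → φ (c * Δ (p j) * d) = 0 := by
    intro c d j hc hd
    obtain ⟨D, hD, h1, -⟩ := hΔ (p j) (p j) (corner M φ c d)
    rw [corner_apply, corner_apply] at h1
    rw [h1, deriv_corner_zero M D hD (p j) c d (hpp j) hc hd, map_zero]
  have hΔpdiag : ∀ k, φ (p k * Δ (p k) * p k) = 0 := by
    intro k
    obtain ⟨D, hD, h1, -⟩ := hΔ (p k) (p k) (corner M φ (p k) (p k))
    rw [corner_apply, corner_apply] at h1
    rw [h1, deriv_sandwich M D hD (p k) (hpp k), map_zero]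
  -- sum over a pair
  have sum_pair_reduce : ∀ (k i : Fin N), k ≠ i → ∀ f : Fin N → ℂ,
      (∀ j, j ≠ k → j ≠ i → f j = 0) → (∑ j, f j) = f k + f i := by
    intro k i hki f hf
    have hsub : (∑ j ∈ ({k, i} : Finset (Fin N)), f j) = ∑ j, f j := by
      refine Finset.sum_subset (Finset.subset_univ _) fun j _ hj => ?_
      simp only [Finset.mem_insert, Finset.mem_singleton, not_or] at hj
      exact hf j hj.1 hj.2
    rw [← hsub, Finset.sum_pair hki]
  -- the key corner identity
  have hPs : ∀ j, P (some j) = p j := fun j => by rw [hPdef]; rfl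
  have hkey : ∀ a b : Option (Fin N),
      φ (P a * Δ z * P b) = ∑ j, l j * φ (P a * Δ (p j) * P b) := by
    intro a b
    by_cases hax : ∃ k, a = some k
    · obtain ⟨k, rfl⟩ := hax
      by_cases hbx : ∃ i, b = some i
      · obtain ⟨i, rfl⟩ := hbx
        simp only [hPs]
        by_cases hki : k = i
        · -- diagonal corner: everything vanishes
          subst hki
          have hz0 : φ (p k * Δ z * p k) = 0 := by
            obtain ⟨D, hD, h1, -⟩ := hΔ z z (corner M φ (p k) (p k))
            rw [corner_apply, corner_apply] at h1
            rw [h1, hφDz D]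
            refine Finset.sum_eq_zero fun j _ => ?_
            rcases eq_or_ne j k with rfl | hjk
            · rw [deriv_sandwich M D hD (p j) (hpp j), map_zero, mul_zero]
            · rw [deriv_corner_zero M D hD (p j) (p k) (p k) (hpp j)
                (horth k j (Ne.symm hjk)) (horth j k hjk), map_zero, mul_zero]
          rw [hz0]
          refine (Finset.sum_eq_zero fun j _ => ?_).symm
          rcases eq_or_ne j k with rfl | hjk
          · rw [hΔpdiag j, mul_zero]
          · rw [hΔp0 _ _ j (horth k j (Ne.symm hjk)) (horth j k hjk), mul_zero]
        · -- off-diagonal corner (k ≠ i)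
          obtain ⟨D, hD, h1, h2⟩ := hΔ z (p i) (corner M φ (p k) (p i))
          rw [corner_apply, corner_apply] at h1
          rw [corner_apply, corner_apply] at h2
          have hcrD : φ (p k * D (p k) * p i) = -φ (p k * D (p i) * p i) := by
            have h3 : p k * D (p k) * p i = -(p k * D (p i) * p i) :=
              eq_neg_of_add_eq_zero_left
                (deriv_cross M D hD (p k) (p i) (hpp k) (hpp i) (horth k i hki))
            rw [h3, map_neg]
          have hvD : ∀ j, j ≠ k → j ≠ i → l j * φ (p k * D (p j) * p i) = 0 := by
            intro j hjk hji
            rw [deriv_corner_zero M D hD (p j) (p k) (p i) (hpp j)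
              (horth k j (Ne.symm hjk)) (horth j i hji), map_zero, mul_zero]
          have hDzval : φ (p k * D z * p i) =
              l k * -φ (p k * D (p i) * p i) + l i * φ (p k * D (p i) * p i) := by
            rw [hφDz D, sum_pair_reduce k i hki _ hvD, hcrD]
          have hΔcross : φ (p k * Δ (p k) * p i) = -φ (p k * Δ (p i) * p i) := by
            obtain ⟨D', hD', g1, g2⟩ := hΔ (p k) (p i) (corner M φ (p k) (p i))
            rw [corner_apply, corner_apply] at g1
            rw [corner_apply, corner_apply] at g2
            have h3 : p k * D' (p k) * p i = -(p k * D' (p i) * p i) :=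
              eq_neg_of_add_eq_zero_left
                (deriv_cross M D' hD' (p k) (p i) (hpp k) (hpp i) (horth k i hki))
            rw [g1, g2, h3, map_neg]
          have hvΔ : ∀ j, j ≠ k → j ≠ i → l j * φ (p k * Δ (p j) * p i) = 0 := by
            intro j hjk hji
            rw [hΔp0 _ _ j (horth k j (Ne.symm hjk)) (horth j i hji), mul_zero]
          rw [h1, hDzval, ← h2, sum_pair_reduce k i hki _ hvΔ, hΔcross]
      · -- b is orthogonal to everything: row corner
        push_neg at hbx
        have hb : ∀ j, b ≠ some j := fun j h => hbx j h
        simp only [hPs]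
        obtain ⟨D, hD, h1, h2⟩ := hΔ z (p k) (corner M φ (p k) (P b))
        rw [corner_apply, corner_apply] at h1
        rw [corner_apply, corner_apply] at h2
        have hDzval : φ (p k * D z * P b) = l k * φ (p k * D (p k) * P b) := by
          rw [hφDz D]
          refine Fintype.sum_eq_single k fun j hjk => ?_
          rw [deriv_corner_zero M D hD (p j) (p k) (P b) (hpp j)
            (horth k j (Ne.symm hjk)) (hPright b j (hb j)), map_zero, mul_zero]
        rw [h1, hDzval, ← h2]
        symm
        refine Fintype.sum_eq_single k fun j hjk => ?_
        rw [hΔp0 _ _ j (horth k j (Ne.symm hjk)) (hPright b j (hb j)), mul_zero]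
    · -- a is orthogonal to everything: column corner
      push_neg at hax
      have ha : ∀ j, a ≠ some j := fun j h => hax j h
      by_cases hbx : ∃ i, b = some i
      · obtain ⟨i, rfl⟩ := hbx
        simp only [hPs]
        obtain ⟨D, hD, h1, h2⟩ := hΔ z (p i) (corner M φ (P a) (p i))
        rw [corner_apply, corner_apply] at h1
        rw [corner_apply, corner_apply] at h2
        have hDzval : φ (P a * D z * p i) = l i * φ (P a * D (p i) * p i) := by
          rw [hφDz D]
          refine Fintype.sum_eq_single i fun j hji => ?_
          rw [deriv_corner_zero M D hD (p j) (P a) (p i) (hpp j)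
            (hPleft a j (ha j)) (horth j i hji), map_zero, mul_zero]
        rw [h1, hDzval, ← h2]
        symm
        refine Fintype.sum_eq_single i fun j hji => ?_
        rw [hΔp0 _ _ j (hPleft a j (ha j)) (horth j i hji), mul_zero]
      · push_neg at hbx
        have hb : ∀ j, b ≠ some j := fun j h => hbx j h
        have hz0 : φ (P a * Δ z * P b) = 0 := by
          obtain ⟨D, hD, h1, -⟩ := hΔ z z (corner M φ (P a) (P b))
          rw [corner_apply, corner_apply] at h1
          rw [h1, hφDz D]
          refine Finset.sum_eq_zero fun j _ => ?_
          rw [deriv_corner_zero M D hD (p j) (P a) (P b) (hpp j) (hPleft a j (ha j))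
            (hPright b j (hb j)), map_zero, mul_zero]
        rw [hz0]
        refine (Finset.sum_eq_zero fun j _ => ?_).symm
        rw [hΔp0 _ _ j (hPleft a j (ha j)) (hPright b j (hb j)), mul_zero]
  -- corner decomposition of φ
  have decomp : ∀ x : M.toStarSubalgebra,
      φ x = ∑ a : Option (Fin N), ∑ b : Option (Fin N), φ (P a * x * P b) := by
    intro x
    have hx : x = (∑ a : Option (Fin N), P a) * x * (∑ b : Option (Fin N), P b) := by
      rw [hPsum, one_mul, mul_one]
    calc φ x = φ ((∑ a : Option (Fin N), P a) * x * (∑ b : Option (Fin N), P b)) := by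
          rw [← hx]
      _ = ∑ a : Option (Fin N), ∑ b : Option (Fin N), φ (P a * x * P b) := by
          simp only [Finset.sum_mul, Finset.mul_sum, map_sum]
          exact Finset.sum_comm
  -- put everything together
  calc φ (Δ z) = ∑ a : Option (Fin N), ∑ b : Option (Fin N), φ (P a * Δ z * P b) := decomp _
    _ = ∑ a : Option (Fin N), ∑ b : Option (Fin N), ∑ j, l j * φ (P a * Δ (p j) * P b) :=
        Finset.sum_congr rfl fun a _ => Finset.sum_congr rfl fun b _ => hkey a b
    _ = ∑ a : Option (Fin N), ∑ j, ∑ b : Option (Fin N), l j * φ (P a * Δ (p j) * P b) :=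
        Finset.sum_congr rfl fun a _ => Finset.sum_comm
    _ = ∑ j, ∑ a : Option (Fin N), ∑ b : Option (Fin N), l j * φ (P a * Δ (p j) * P b) :=
        Finset.sum_comm
    _ = ∑ j, l j * φ (Δ (p j)) := by
        refine Finset.sum_congr rfl fun j _ => ?_
        rw [decomp (Δ (p j)), Finset.mul_sum]
        exact Finset.sum_congr rfl fun a _ => (Finset.mul_sum _ _ _).symm
    _ = φ (∑ j, l j • Δ (p j)) := by
        rw [map_sum]
        simp only [map_smul, smul_eq_mul]
end

section
/- Let M be a von Neumann algebra acting on a complex Hilbert space H and let Δ : M → M be a weak-2-local derivation on M. Suppose a = ∑_{i=1}^{m₁} λᵢ pᵢ and b = ∑_{j=1}^{m₂} μⱼ qⱼ, where λᵢ, μⱼ are complex numbers and p₁, …, p_{m₁}, q₁, …, q_{m₂} are mutually orthogonal projections in M (the product of any two distinct members of this combined family is 0). Then Δ(a + b) = Δ(a) + Δ(b). -/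
variable {H : Type*} [NormedAddCommGroup H] [InnerProductSpace ℂ H] [CompleteSpace H]

section Helpers

variable {A : Type*} [Ring A] [Algebra ℂ A]

private lemma deriv_expand (D : A →ₗ[ℂ] A)
    (hD : ∀ x y, D (x * y) = D x * y + x * D y) {e : A} (he : e * e = e) :
    D e = D e * e + e * D e := by
  conv_lhs => rw [← he, hD]

/-- Corner of a derivation applied to a combination of idempotents vanishes when the
compressing elements annihilate the idempotents. -/
private lemma corner_deriv_zero {m : ℕ} (p : Fin m → A) (l : Fin m → ℂ)
    (hid : ∀ k, p k * p k = p k) (g h : A)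
    (hg : ∀ k, g * p k = 0) (hh : ∀ k, p k * h = 0)
    (D : A →ₗ[ℂ] A) (hD : ∀ x y, D (x * y) = D x * y + x * D y) :
    g * D (∑ k, l k • p k) * h = 0 := by
  rw [map_sum, Finset.mul_sum, Finset.sum_mul]
  refine Finset.sum_eq_zero fun k _ => ?_
  rw [map_smul, mul_smul_comm, smul_mul_assoc]
  rw [deriv_expand D hD (hid k)]
  have : g * (D (p k) * p k + p k * D (p k)) * h
      = g * D (p k) * (p k * h) + g * p k * (D (p k) * h) := by noncomm_ring
  rw [this, hh k, mul_zero, hg k, zero_mul, add_zero, smul_zero]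

/-- `p i * D (∑ l k • p k) * e = -(l i) • (p i * D e)` for mutually orthogonal idempotents
`p k` and an element `e` orthogonal to all of them. -/
private lemma mixed_corner_a {m : ℕ} (p : Fin m → A) (l : Fin m → ℂ) (i : Fin m) (e : A)
    (hid : ∀ k, p k * p k = p k)
    (hpp : ∀ k k', k ≠ k' → p k * p k' = 0)
    (hpe : ∀ k, p k * e = 0)
    (D : A →ₗ[ℂ] A) (hD : ∀ x y, D (x * y) = D x * y + x * D y) :
    p i * D (∑ k, l k • p k) * e = (-(l i)) • (p i * D e) := by
  have hkey : D (p i) * e = -(p i * D e) := by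
    have h0 : D (p i) * e + p i * D e = 0 := by
      rw [← hD, hpe, map_zero]
    exact eq_neg_of_add_eq_zero_left h0
  rw [map_sum, Finset.mul_sum, Finset.sum_mul, Finset.sum_eq_single i]
  · rw [map_smul, mul_smul_comm, smul_mul_assoc]
    rw [deriv_expand D hD (hid i)]
    have : p i * (D (p i) * p i + p i * D (p i)) * e
        = p i * D (p i) * (p i * e) + (p i * p i) * (D (p i) * e) := by noncomm_ring
    rw [this, hpe i, mul_zero, hid i, zero_add, hkey, mul_neg, ← mul_assoc, hid i,
      smul_neg, neg_smul]
  · intro k _ hk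
    rw [map_smul, mul_smul_comm, smul_mul_assoc]
    rw [deriv_expand D hD (hid k)]
    have : p i * (D (p k) * p k + p k * D (p k)) * e
        = p i * D (p k) * (p k * e) + (p i * p k) * (D (p k) * e) := by noncomm_ring
    rw [this, hpe k, mul_zero, hpp i k (Ne.symm hk), zero_mul, add_zero, smul_zero]
  · intro h; exact absurd (Finset.mem_univ i) h

/-- `e * D (∑ μ k • q k) * q j = μ j • (e * D (q j))` for mutually orthogonal idempotents
`q k` and an element `e` orthogonal to all of them. -/
private lemma mixed_corner_b {m : ℕ} (q : Fin m → A) (μ : Fin m → ℂ) (j : Fin m) (e : A)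
    (hid : ∀ k, q k * q k = q k)
    (hqq : ∀ k k', k ≠ k' → q k * q k' = 0)
    (heq : ∀ k, e * q k = 0)
    (D : A →ₗ[ℂ] A) (hD : ∀ x y, D (x * y) = D x * y + x * D y) :
    e * D (∑ k, μ k • q k) * q j = (μ j) • (e * D (q j)) := by
  have hkey : e * D (q j) = -(D e * q j) := by
    have h0 : D e * q j + e * D (q j) = 0 := by
      rw [← hD, heq, map_zero]
    exact eq_neg_of_add_eq_zero_right h0
  rw [map_sum, Finset.mul_sum, Finset.sum_mul, Finset.sum_eq_single j]
  · rw [map_smul, mul_smul_comm, smul_mul_assoc]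
    congr 1
    rw [hkey, neg_mul, mul_assoc, hid j]
  · intro k _ hk
    rw [map_smul, mul_smul_comm, smul_mul_assoc]
    rw [deriv_expand D hD (hid k)]
    have : e * (D (q k) * q k + q k * D (q k)) * q j
        = (e * D (q k)) * (q k * q j) + (e * q k) * (D (q k) * q j) := by noncomm_ring
    rw [this, hqq k j hk, mul_zero, heq k, zero_mul, add_zero, smul_zero]
  · intro h; exact absurd (Finset.mem_univ j) h

private lemma scalar_trick (α β : ℂ) {X Y Z : ℂ}
    (h₁ : ∃ c, X = (α + β) * c ∧ Y = α * c)
    (h₂ : ∃ c, X = (α + β) * c ∧ Z = β * c)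
    (h₃ : ∃ c, Y = α * c ∧ Z = β * c) : X = Y + Z := by
  obtain ⟨c₁, e₁, e₂⟩ := h₁
  obtain ⟨c₂, e₃, e₄⟩ := h₂
  obtain ⟨c₃, e₅, e₆⟩ := h₃
  by_cases h : α + β = 0
  · rw [e₁, e₅, e₆]
    linear_combination (c₁ - c₃) * h
  · have hc : c₁ = c₂ := mul_left_cancel₀ h (e₁.symm.trans e₃)
    rw [e₁, e₂, e₄, hc]
    ring

end Helpers

set_option maxHeartbeats 8000000 in
/-- A weak-2-local derivation on a von Neumann algebra is additive on two elements which are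
complex linear combinations of members of a family of mutually orthogonal projections. -/
theorem weak2LocalDerivation_add_of_orthogonal_combinations (M : VonNeumannAlgebra H)
    (Δ : M.toStarSubalgebra → M.toStarSubalgebra) (hΔ : IsWeak2LocalDerivation M Δ)
    (m₁ m₂ : ℕ) (p : Fin m₁ → M.toStarSubalgebra) (q : Fin m₂ → M.toStarSubalgebra)
    (hp : ∀ i, star (p i) = p i ∧ p i * p i = p i)
    (hq : ∀ j, star (q j) = q j ∧ q j * q j = q j)
    (hpp : ∀ i j, i ≠ j → p i * p j = 0)
    (hqq : ∀ i j, i ≠ j → q i * q j = 0)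
    (hpq : ∀ i j, p i * q j = 0 ∧ q j * p i = 0)
    (l : Fin m₁ → ℂ) (μ : Fin m₂ → ℂ)
    (a b : M.toStarSubalgebra) (ha : a = ∑ i, l i • p i) (hb : b = ∑ j, μ j • q j) :
    Δ (a + b) = Δ a + Δ b := by
  classical
  set r : M.toStarSubalgebra := ∑ i, p i with hr
  set s : M.toStarSubalgebra := ∑ j, q j with hs
  set f : M.toStarSubalgebra := 1 - r - s with hf
  -- basic multiplicative facts
  have hrp : ∀ k, r * p k = p k := by
    intro k
    rw [hr, Finset.sum_mul, Finset.sum_eq_single k]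
    · exact (hp k).2
    · intro i _ hik; exact hpp i k hik
    · intro h; exact absurd (Finset.mem_univ k) h
  have hpr : ∀ k, p k * r = p k := by
    intro k
    rw [hr, Finset.mul_sum, Finset.sum_eq_single k]
    · exact (hp k).2
    · intro i _ hik; exact hpp k i (Ne.symm hik)
    · intro h; exact absurd (Finset.mem_univ k) h
  have hsq : ∀ k, s * q k = q k := by
    intro k
    rw [hs, Finset.sum_mul, Finset.sum_eq_single k]
    · exact (hq k).2
    · intro j _ hjk; exact hqq j k hjk
    · intro h; exact absurd (Finset.mem_univ k) h
  have hqs : ∀ k, q k * s = q k := by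
    intro k
    rw [hs, Finset.mul_sum, Finset.sum_eq_single k]
    · exact (hq k).2
    · intro j _ hjk; exact hqq k j (Ne.symm hjk)
    · intro h; exact absurd (Finset.mem_univ k) h
  have hrq : ∀ k, r * q k = 0 := by
    intro k; rw [hr, Finset.sum_mul]
    exact Finset.sum_eq_zero fun i _ => (hpq i k).1
  have hqr : ∀ k, q k * r = 0 := by
    intro k; rw [hr, Finset.mul_sum]
    exact Finset.sum_eq_zero fun i _ => (hpq i k).2
  have hsp : ∀ k, s * p k = 0 := by
    intro k; rw [hs, Finset.sum_mul]
    exact Finset.sum_eq_zero fun j _ => (hpq k j).2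
  have hps : ∀ k, p k * s = 0 := by
    intro k; rw [hs, Finset.mul_sum]
    exact Finset.sum_eq_zero fun j _ => (hpq k j).1
  have hfp : ∀ k, f * p k = 0 := by
    intro k; rw [hf, sub_mul, sub_mul, one_mul, hrp, hsp, sub_zero, sub_self]
  have hpf : ∀ k, p k * f = 0 := by
    intro k; rw [hf, mul_sub, mul_sub, mul_one, hpr, hps, sub_zero, sub_self]
  have hfq : ∀ k, f * q k = 0 := by
    intro k; rw [hf, sub_mul, sub_mul, one_mul, hrq, hsq, sub_zero, sub_self]
  have hqf : ∀ k, q k * f = 0 := by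
    intro k; rw [hf, mul_sub, mul_sub, mul_one, hqr, hqs, sub_zero, sub_self]
  -- compression functionals
  have mkψ : ∀ (g h : M.toStarSubalgebra) (φ : M.toStarSubalgebra →L[ℂ] ℂ),
      ∃ ψ : M.toStarSubalgebra →L[ℂ] ℂ, ∀ x, ψ x = φ (g * x * h) := by
    intro g h φ
    refine ⟨φ.comp ((ContinuousLinearMap.mul ℂ M.toStarSubalgebra g).comp
      ((ContinuousLinearMap.mul ℂ M.toStarSubalgebra).flip h)), fun x => ?_⟩
    simp [mul_assoc]
  -- corner additivity where the `b`-part vanishes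
  have cornB : ∀ g h : M.toStarSubalgebra, (∀ k, g * q k = 0) → (∀ k, q k * h = 0) →
      ∀ φ : M.toStarSubalgebra →L[ℂ] ℂ,
        φ (g * Δ (a + b) * h) = φ (g * Δ a * h) + φ (g * Δ b * h) := by
    intro g h hg hh φ
    obtain ⟨ψ, hψ⟩ := mkψ g h φ
    obtain ⟨D, hD, h1, h2⟩ := hΔ (a + b) a ψ
    obtain ⟨D', hD', h3, -⟩ := hΔ b b ψ
    have z1 : g * D b * h = 0 := by
      rw [hb]; exact corner_deriv_zero q μ (fun k => (hq k).2) g h hg hh D hD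
    have z2 : g * D' b * h = 0 := by
      rw [hb]; exact corner_deriv_zero q μ (fun k => (hq k).2) g h hg hh D' hD'
    have e1 : ψ (Δ (a + b)) = ψ (Δ a) := by
      rw [h1, map_add, map_add, h2, hψ (D b), z1, map_zero, add_zero]
    have e2 : ψ (Δ b) = 0 := by
      rw [h3, hψ (D' b), z2, map_zero]
    rw [← hψ, ← hψ, ← hψ, e1, e2, add_zero]
  -- corner additivity where the `a`-part vanishes
  have cornA : ∀ g h : M.toStarSubalgebra, (∀ k, g * p k = 0) → (∀ k, p k * h = 0) →
      ∀ φ : M.toStarSubalgebra →L[ℂ] ℂ,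
        φ (g * Δ (a + b) * h) = φ (g * Δ a * h) + φ (g * Δ b * h) := by
    intro g h hg hh φ
    obtain ⟨ψ, hψ⟩ := mkψ g h φ
    obtain ⟨D, hD, h1, h2⟩ := hΔ (a + b) b ψ
    obtain ⟨D', hD', h3, -⟩ := hΔ a a ψ
    have z1 : g * D a * h = 0 := by
      rw [ha]; exact corner_deriv_zero p l (fun k => (hp k).2) g h hg hh D hD
    have z2 : g * D' a * h = 0 := by
      rw [ha]; exact corner_deriv_zero p l (fun k => (hp k).2) g h hg hh D' hD'
    have e1 : ψ (Δ (a + b)) = ψ (Δ b) := by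
      rw [h1, map_add, map_add, h2, hψ (D a), z1, map_zero, zero_add]
    have e2 : ψ (Δ a) = 0 := by
      rw [h3, hψ (D' a), z2, map_zero]
    rw [← hψ, ← hψ, ← hψ, e1, e2, zero_add]
  -- mixed corners p i · q j
  have cornPQ : ∀ (i : Fin m₁) (j : Fin m₂) (φ : M.toStarSubalgebra →L[ℂ] ℂ),
      φ (p i * Δ (a + b) * q j) = φ (p i * Δ a * q j) + φ (p i * Δ b * q j) := by
    intro i j φ
    obtain ⟨ψ, hψ⟩ := mkψ (p i) (q j) φ
    have keyA : ∀ (D : M.toStarSubalgebra →ₗ[ℂ] M.toStarSubalgebra),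
        (∀ x y, D (x * y) = D x * y + x * D y) →
        ψ (D a) = (-(l i)) * φ (p i * D (q j)) := by
      intro D hD
      rw [hψ, ha, mixed_corner_a p l i (q j) (fun k => (hp k).2) hpp
        (fun k => (hpq k j).1) D hD, map_smul, smul_eq_mul]
    have keyB : ∀ (D : M.toStarSubalgebra →ₗ[ℂ] M.toStarSubalgebra),
        (∀ x y, D (x * y) = D x * y + x * D y) →
        ψ (D b) = (μ j) * φ (p i * D (q j)) := by
      intro D hD
      rw [hψ, hb, mixed_corner_b q μ j (p i) (fun k => (hq k).2) hqq
        (fun k => (hpq i k).1) D hD, map_smul, smul_eq_mul]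
    obtain ⟨D₁, hD₁, e1, e2⟩ := hΔ (a + b) a ψ
    obtain ⟨D₂, hD₂, e3, e4⟩ := hΔ (a + b) b ψ
    obtain ⟨D₃, hD₃, e5, e6⟩ := hΔ a b ψ
    rw [← hψ, ← hψ, ← hψ]
    refine scalar_trick (-(l i)) (μ j) ⟨φ (p i * D₁ (q j)), ?_, ?_⟩
      ⟨φ (p i * D₂ (q j)), ?_, ?_⟩ ⟨φ (p i * D₃ (q j)), ?_, ?_⟩
    · rw [e1, map_add, map_add, keyA D₁ hD₁, keyB D₁ hD₁]; ring
    · rw [e2, keyA D₁ hD₁]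
    · rw [e3, map_add, map_add, keyA D₂ hD₂, keyB D₂ hD₂]; ring
    · rw [e4, keyB D₂ hD₂]
    · rw [e5, keyA D₃ hD₃]
    · rw [e6, keyB D₃ hD₃]
  -- mixed corners q j · p i
  have cornQP : ∀ (i : Fin m₁) (j : Fin m₂) (φ : M.toStarSubalgebra →L[ℂ] ℂ),
      φ (q j * Δ (a + b) * p i) = φ (q j * Δ a * p i) + φ (q j * Δ b * p i) := by
    intro i j φ
    obtain ⟨ψ, hψ⟩ := mkψ (q j) (p i) φ
    have keyA : ∀ (D : M.toStarSubalgebra →ₗ[ℂ] M.toStarSubalgebra),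
        (∀ x y, D (x * y) = D x * y + x * D y) →
        ψ (D a) = (l i) * φ (q j * D (p i)) := by
      intro D hD
      rw [hψ, ha, mixed_corner_b p l i (q j) (fun k => (hp k).2) hpp
        (fun k => (hpq k j).2) D hD, map_smul, smul_eq_mul]
    have keyB : ∀ (D : M.toStarSubalgebra →ₗ[ℂ] M.toStarSubalgebra),
        (∀ x y, D (x * y) = D x * y + x * D y) →
        ψ (D b) = (-(μ j)) * φ (q j * D (p i)) := by
      intro D hD
      rw [hψ, hb, mixed_corner_a q μ j (p i) (fun k => (hq k).2) hqq
        (fun k => (hpq i k).2) D hD, map_smul, smul_eq_mul]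
    obtain ⟨D₁, hD₁, e1, e2⟩ := hΔ (a + b) a ψ
    obtain ⟨D₂, hD₂, e3, e4⟩ := hΔ (a + b) b ψ
    obtain ⟨D₃, hD₃, e5, e6⟩ := hΔ a b ψ
    rw [← hψ, ← hψ, ← hψ]
    refine scalar_trick (l i) (-(μ j)) ⟨φ (q j * D₁ (p i)), ?_, ?_⟩
      ⟨φ (q j * D₂ (p i)), ?_, ?_⟩ ⟨φ (q j * D₃ (p i)), ?_, ?_⟩
    · rw [e1, map_add, map_add, keyA D₁ hD₁, keyB D₁ hD₁]; ring
    · rw [e2, keyA D₁ hD₁]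
    · rw [e3, map_add, map_add, keyA D₂ hD₂, keyB D₂ hD₂]; ring
    · rw [e4, keyB D₂ hD₂]
    · rw [e5, keyA D₃ hD₃]
    · rw [e6, keyB D₃ hD₃]
  -- assemble the r·s corner from the p i · q j corners
  have hrws : ∀ (φ : M.toStarSubalgebra →L[ℂ] ℂ) (w : M.toStarSubalgebra),
      φ (r * w * s) = ∑ i, ∑ j, φ (p i * w * q j) := by
    intro φ w
    rw [hr, hs]
    simp only [Finset.sum_mul, Finset.mul_sum, map_sum]
    rw [Finset.sum_comm]
  have cornRS : ∀ φ : M.toStarSubalgebra →L[ℂ] ℂ,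
      φ (r * Δ (a + b) * s) = φ (r * Δ a * s) + φ (r * Δ b * s) := by
    intro φ
    rw [hrws, hrws, hrws, ← Finset.sum_add_distrib]
    refine Finset.sum_congr rfl fun i _ => ?_
    rw [← Finset.sum_add_distrib]
    exact Finset.sum_congr rfl fun j _ => cornPQ i j φ
  have hswr : ∀ (φ : M.toStarSubalgebra →L[ℂ] ℂ) (w : M.toStarSubalgebra),
      φ (s * w * r) = ∑ i, ∑ j, φ (q j * w * p i) := by
    intro φ w
    rw [hr, hs]
    simp only [Finset.sum_mul, Finset.mul_sum, map_sum]
  have cornSR : ∀ φ : M.toStarSubalgebra →L[ℂ] ℂ,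
      φ (s * Δ (a + b) * r) = φ (s * Δ a * r) + φ (s * Δ b * r) := by
    intro φ
    rw [hswr, hswr, hswr, ← Finset.sum_add_distrib]
    refine Finset.sum_congr rfl fun i _ => ?_
    rw [← Finset.sum_add_distrib]
    exact Finset.sum_congr rfl fun j _ => cornQP i j φ
  -- nine-corner expansion of any functional
  have hone : r + s + f = 1 := by rw [hf]; abel
  have expand : ∀ (φ : M.toStarSubalgebra →L[ℂ] ℂ) (w : M.toStarSubalgebra),
      φ w = φ (r * w * r) + φ (r * w * s) + φ (r * w * f) + φ (s * w * r) + φ (s * w * s)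
        + φ (s * w * f) + φ (f * w * r) + φ (f * w * s) + φ (f * w * f) := by
    intro φ w
    have h2 : w = r * w * r + r * w * s + r * w * f + s * w * r + s * w * s
        + s * w * f + f * w * r + f * w * s + f * w * f := by
      calc w = (r + s + f) * w * (r + s + f) := by rw [hone, one_mul, mul_one]
      _ = _ := by noncomm_ring
    conv_lhs => rw [h2]
    simp only [map_add]
  -- final identity against every functional
  have main : ∀ φ : M.toStarSubalgebra →L[ℂ] ℂ, φ (Δ (a + b)) = φ (Δ a) + φ (Δ b) := by
    intro φ
    have c_rr := cornB r r hrq hqr φ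
    have c_rf := cornB r f hrq hqf φ
    have c_fr := cornB f r hfq hqr φ
    have c_ff := cornB f f hfq hqf φ
    have c_ss := cornA s s hsp hps φ
    have c_sf := cornA s f hsp hpf φ
    have c_fs := cornA f s hfp hps φ
    have c_rs := cornRS φ
    have c_sr := cornSR φ
    rw [expand φ (Δ (a + b)), expand φ (Δ a), expand φ (Δ b)]
    linear_combination c_rr + c_rs + c_rf + c_sr + c_ss + c_sf + c_fr + c_fs + c_ff
  have hz : Δ (a + b) - (Δ a + Δ b) = 0 := by
    refine NormedSpace.eq_zero_of_forall_dual_eq_zero ℂ fun φ => ?_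
    rw [map_sub, map_add, main φ]
    ring
  exact sub_eq_zero.mp hz
end

section
/- Let M be a von Neumann algebra acting on a complex Hilbert space H and let Δ : M → M be a weak-2-local derivation on M. Suppose p and q are projections in M with pq = 0, and a ∈ M satisfies pa = ap = qa = aq = 0. Then for all λ, μ ∈ ℂ: (i) pΔ(a + λp + μq)q = pΔ(λp + μq)q; (ii) pΔ(a + λp)p = λ pΔ(p)p = 0. Furthermore, for every b ∈ M and every λ ∈ ℂ: (iii) qΔ(b + λp)q = qΔ(b)q; and (iv) qΔ(qbq + λq)q = qΔ(qbq)q. -/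
variable {H : Type*} [NormedAddCommGroup H] [InnerProductSpace ℂ H] [CompleteSpace H]

/-- For a derivation `D` and a projection `p`, the corner `p * D p * p` vanishes. -/
lemma aux_deriv_proj {A : Type*} [Ring A] [Algebra ℂ A] (D : A →ₗ[ℂ] A)
    (hD : ∀ u v, D (u * v) = D u * v + u * D v) (p : A) (hp : p * p = p) :
    p * D p * p = 0 := by
  have h := hD p p
  rw [hp] at h
  have h2 : p * D p * p = p * D p * p + p * D p * p := by
    calc p * D p * p = p * (D p * p + p * D p) * p := by rw [← h]
      _ = p * D p * (p * p) + (p * p) * (D p * p) := by noncomm_ring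
      _ = p * D p * p + p * D p * p := by rw [hp, ← mul_assoc]
  exact left_eq_add.mp h2

/-- For a derivation `D`, if `p * a = 0` and `a * f = 0` then `p * D a * f = 0`. -/
lemma aux_deriv_ann {A : Type*} [Ring A] [Algebra ℂ A] (D : A →ₗ[ℂ] A)
    (hD : ∀ u v, D (u * v) = D u * v + u * D v) (p a f : A)
    (h1 : p * a = 0) (h2 : a * f = 0) : p * D a * f = 0 := by
  have h := hD p a
  rw [h1, map_zero] at h
  have hpd : p * D a = -(D p * a) := eq_neg_of_add_eq_zero_right h.symm
  rw [hpd]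
  rw [neg_mul, mul_assoc, h2, mul_zero, neg_zero]

set_option maxHeartbeats 1000000 in
/-- Lemma on weak-2-local derivations on a von Neumann algebra: behaviour on corners determined
by orthogonal projections. -/
theorem weak2LocalDerivation_corner_identities (M : VonNeumannAlgebra H)
    (Δ : M.toStarSubalgebra → M.toStarSubalgebra) (hΔ : IsWeak2LocalDerivation M Δ)
    (p q : M.toStarSubalgebra)
    (hp : star p = p ∧ p * p = p) (hq : star q = q ∧ q * q = q) (hpq : p * q = 0)
    (a : M.toStarSubalgebra) (ha : p * a = 0 ∧ a * p = 0 ∧ q * a = 0 ∧ a * q = 0) :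
    (∀ l μ : ℂ, p * Δ (a + l • p + μ • q) * q = p * Δ (l • p + μ • q) * q) ∧
    (∀ l : ℂ, p * Δ (a + l • p) * p = l • (p * Δ p * p) ∧ p * Δ (a + l • p) * p = 0) ∧
    (∀ (b : M.toStarSubalgebra) (l : ℂ), q * Δ (b + l • p) * q = q * Δ b * q) ∧
    (∀ (b : M.toStarSubalgebra) (l : ℂ),
      q * Δ (q * b * q + l • q) * q = q * Δ (q * b * q) * q) := by
  obtain ⟨hps, hpp⟩ := hp
  obtain ⟨hqs, hqq⟩ := hq
  obtain ⟨hpa, hap, hqa, haq⟩ := ha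
  have hqp : q * p = 0 := by
    have : star (q * p) = star p * star q := star_mul q p
    rw [hps, hqs] at this
    rw [← star_star (q * p), this, hpq, star_zero]
  -- separation by continuous linear functionals
  have sep : ∀ z : M.toStarSubalgebra,
      (∀ φ : M.toStarSubalgebra →L[ℂ] ℂ, φ z = 0) → z = 0 := fun z h =>
    NormedSpace.eq_zero_of_forall_dual_eq_zero ℂ h
  -- two-point corner identity
  have corner : ∀ e f x y : M.toStarSubalgebra,
      (∀ D : M.toStarSubalgebra →ₗ[ℂ] M.toStarSubalgebra,
        (∀ u v, D (u * v) = D u * v + u * D v) → e * D x * f = e * D y * f) →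
      e * Δ x * f = e * Δ y * f := by
    clear hpa hap hqa haq hpq hqp hpp hqq
    intro e f x y h
    rw [← sub_eq_zero]
    apply sep
    intro φ
    let ψ : M.toStarSubalgebra →L[ℂ] ℂ :=
      φ.comp (((ContinuousLinearMap.mul ℂ _).flip f).comp (ContinuousLinearMap.mul ℂ _ e))
    obtain ⟨D, hD, h1, h2⟩ := hΔ x y ψ
    have hψ : ∀ z, ψ z = φ (e * z * f) := by
      intro z
      simp only [ψ, ContinuousLinearMap.comp_apply, ContinuousLinearMap.flip_apply,
        ContinuousLinearMap.mul_apply']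
    rw [map_sub, ← hψ, ← hψ, h1, h2, hψ, hψ, h D hD, sub_self]
  -- one-point corner vanishing
  have corner0 : ∀ e f x : M.toStarSubalgebra,
      (∀ D : M.toStarSubalgebra →ₗ[ℂ] M.toStarSubalgebra,
        (∀ u v, D (u * v) = D u * v + u * D v) → e * D x * f = 0) →
      e * Δ x * f = 0 := by
    intro e f x h
    apply sep
    intro φ
    let ψ : M.toStarSubalgebra →L[ℂ] ℂ :=
      φ.comp (((ContinuousLinearMap.mul ℂ _).flip f).comp (ContinuousLinearMap.mul ℂ _ e))
    obtain ⟨D, hD, h1, _⟩ := hΔ x x ψ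
    have hψ : ∀ z, ψ z = φ (e * z * f) := by
      intro z
      simp only [ψ, ContinuousLinearMap.comp_apply, ContinuousLinearMap.flip_apply,
        ContinuousLinearMap.mul_apply']
    rw [← hψ, h1, hψ, h D hD, map_zero]
  refine ⟨?_, ?_, ?_, ?_⟩
  · -- (i)
    intro l μ
    apply corner
    intro D hD
    have : a + l • p + μ • q = a + (l • p + μ • q) := add_assoc _ _ _
    rw [this, map_add, mul_add, add_mul]
    rw [aux_deriv_ann D hD p a q hpa haq, zero_add]
  · -- (ii)
    intro l
    have h2 : p * Δ (a + l • p) * p = 0 := by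
      apply corner0
      intro D hD
      rw [map_add, map_smul, mul_add, add_mul]
      rw [aux_deriv_ann D hD p a p hpa hap, mul_smul_comm, smul_mul_assoc,
        aux_deriv_proj D hD p hpp, smul_zero, add_zero]
    have h3 : p * Δ p * p = 0 := by
      apply corner0
      intro D hD
      exact aux_deriv_proj D hD p hpp
    exact ⟨by rw [h2, h3, smul_zero], h2⟩
  · -- (iii)
    intro b l
    apply corner
    intro D hD
    rw [map_add, map_smul, mul_add, add_mul, mul_smul_comm, smul_mul_assoc,
      aux_deriv_ann D hD q p q hqp hpq, smul_zero, add_zero]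
  · -- (iv)
    intro b l
    apply corner
    intro D hD
    rw [map_add, map_smul, mul_add, add_mul, mul_smul_comm, smul_mul_assoc,
      aux_deriv_proj D hD q hqq, smul_zero, add_zero]
end

section
/- Let A be a complex C*-algebra and let Δ : A → A be a weak-2-local *-derivation on A. Then for all self-adjoint elements a, b ∈ A (a* = a, b* = b): Δ(a + ib) = Δ(a) + iΔ(b) and Δ(a + ib) = Δ(a − ib)*. -/
variable {A : Type*} [NonUnitalCStarAlgebra A]

/-- A (not necessarily linear) map `Δ` on a complex C*-algebra `A` is a weak-2-local
*-derivation if for all `a b ∈ A` and every continuous linear functional `φ` on `A` there is a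
*-derivation `D` on `A` (a `ℂ`-linear map satisfying the Leibniz rule and commuting with the
involution) such that `φ (Δ a) = φ (D a)` and `φ (Δ b) = φ (D b)`. -/
def IsWeak2LocalStarDerivation (Δ : A → A) : Prop :=
  ∀ (a b : A) (φ : A →L[ℂ] ℂ),
    ∃ D : A →ₗ[ℂ] A,
      (∀ x y, D (x * y) = D x * y + x * D y) ∧
      (∀ x, D (star x) = star (D x)) ∧
      φ (Δ a) = φ (D a) ∧ φ (Δ b) = φ (D b)

/-!
Call a functional `χ` hermitian if `χ (x⋆) = conj (χ x)`, i.e. `χ` is self-adjoint for the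
intrinsic star on `WithConv (A →L[ℂ] ℂ)`. For hermitian `χ` and a *-derivation `D`, `χ ∘ D` is
real on self-adjoint elements, so for `z = a + t i b` (`a`, `b` self-adjoint, `t` real) the
*-derivation given for the pair `(z, a)` shows `Re χ (Δ z) = χ (Δ a)`, and the one given for
`(z, b)` shows `Im χ (Δ z) = t χ (Δ b)`. Hermitian functionals separate points
(`φ = Re φ + i Im φ` and Hahn–Banach), so `Δ (a + t i b) = Δ a + t i Δ b` and `Δ` preserves
self-adjointness; `t = ± 1` gives both identities.
-/

open Complex ComplexStarModule WithConv

theorem IsSelfAdjoint.map_isSelfAdjoint {R E F : Type*} [Semiring R] [InvolutiveStar R]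
    [AddCommMonoid E] [Module R E] [StarAddMonoid E] [StarModule R E] [TopologicalSpace E]
    [ContinuousStar E] [AddCommMonoid F] [Module R F] [StarAddMonoid F] [StarModule R F]
    [TopologicalSpace F] [ContinuousStar F] {f : WithConv (E →L[R] F)} (hf : IsSelfAdjoint f)
    {x : E} (hx : IsSelfAdjoint x) : IsSelfAdjoint (f x) := by
  rw [IsSelfAdjoint, ← (ContinuousLinearMap.IntrinsicStar.isSelfAdjoint_iff_map_star f).1 hf x,
    hx.star_eq]

theorem SeparatingDual.eq_of_forall_isSelfAdjoint_apply_eq {E : Type*} [AddCommGroup E]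
    [TopologicalSpace E] [Module ℂ E] [StarAddMonoid E] [StarModule ℂ E] [ContinuousStar E]
    [SeparatingDual ℂ E] {x y : E}
    (h : ∀ χ : WithConv (E →L[ℂ] ℂ), IsSelfAdjoint χ → χ x = χ y) : x = y := by
  refine (SeparatingDual.eq_iff_forall_dual_eq (R := ℂ)).2 fun φ => ?_
  set ψ : WithConv (E →L[ℂ] ℂ) := toConv φ
  have hψ : ∀ z, φ z = (ℜ ψ : WithConv (E →L[ℂ] ℂ)) z + I * (ℑ ψ : WithConv (E →L[ℂ] ℂ)) z :=
    fun z => congr($((realPart_add_I_smul_imaginaryPart ψ).symm) z)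
  rw [hψ, hψ, h (ℜ ψ) (ℜ ψ).2, h (ℑ ψ) (ℑ ψ).2]

theorem Complex.re_im_add_ofReal_mul_I_mul {u v : ℂ} (hu : IsSelfAdjoint u)
    (hv : IsSelfAdjoint v) (t : ℝ) :
    (u + (t * I) * v).re = u.re ∧ (u + (t * I) * v).im = t * v.re := by
  rw [← im_eq_zero_iff_isSelfAdjoint] at hu hv
  simp [hu, hv]

namespace IsWeak2LocalStarDerivation

variable {Δ : A → A} {χ : WithConv (A →L[ℂ] ℂ)} {a b : A}

theorem isSelfAdjoint_dual_apply (hΔ : IsWeak2LocalStarDerivation Δ) (hχ : IsSelfAdjoint χ)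
    (ha : IsSelfAdjoint a) : IsSelfAdjoint (χ (Δ a)) := by
  obtain ⟨D, -, hD, h, -⟩ := hΔ a a χ.ofConv
  rw [h]
  exact hχ.map_isSelfAdjoint ((hD a).symm.trans (congrArg D ha))

theorem isSelfAdjoint_apply (hΔ : IsWeak2LocalStarDerivation Δ) (ha : IsSelfAdjoint a) :
    IsSelfAdjoint (Δ a) :=
  SeparatingDual.eq_of_forall_isSelfAdjoint_apply_eq fun χ hχ => by
    rw [(ContinuousLinearMap.IntrinsicStar.isSelfAdjoint_iff_map_star χ).1 hχ,
      (hΔ.isSelfAdjoint_dual_apply hχ ha).star_eq]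

theorem dual_apply_add_ofReal_mul_I_smul (hΔ : IsWeak2LocalStarDerivation Δ)
    (hχ : IsSelfAdjoint χ) (ha : IsSelfAdjoint a) (hb : IsSelfAdjoint b) (t : ℝ) :
    χ (Δ (a + (t * I) • b)) = χ (Δ a) + (t * I) * χ (Δ b) := by
  have hD_real : ∀ D : A →ₗ[ℂ] A, (∀ x, D (star x) = star (D x)) →
      ∀ c : A, IsSelfAdjoint c → IsSelfAdjoint (χ (D c)) := fun D hD c hc =>
    hχ.map_isSelfAdjoint ((hD c).symm.trans (congrArg D hc))
  have hΔ_parts := re_im_add_ofReal_mul_I_mul (hΔ.isSelfAdjoint_dual_apply hχ ha)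
    (hΔ.isSelfAdjoint_dual_apply hχ hb) t
  obtain ⟨D₁, -, hD₁, hz₁, ha₁⟩ := hΔ (a + (t * I) • b) a χ.ofConv
  obtain ⟨D₂, -, hD₂, hz₂, hb₂⟩ := hΔ (a + (t * I) • b) b χ.ofConv
  have hD₁_parts := re_im_add_ofReal_mul_I_mul (hD_real D₁ hD₁ a ha) (hD_real D₁ hD₁ b hb) t
  have hD₂_parts := re_im_add_ofReal_mul_I_mul (hD_real D₂ hD₂ a ha) (hD_real D₂ hD₂ b hb) t
  simp only [map_add, map_smul, smul_eq_mul] at hz₁ hz₂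
  apply Complex.ext
  · rw [hz₁, hD₁_parts.1, ← ha₁, hΔ_parts.1]
  · rw [hz₂, hD₂_parts.2, ← hb₂, hΔ_parts.2]

theorem apply_add_ofReal_mul_I_smul (hΔ : IsWeak2LocalStarDerivation Δ) (ha : IsSelfAdjoint a)
    (hb : IsSelfAdjoint b) (t : ℝ) : Δ (a + (t * I) • b) = Δ a + (t * I) • Δ b :=
  SeparatingDual.eq_of_forall_isSelfAdjoint_apply_eq fun χ hχ => by
    rw [hΔ.dual_apply_add_ofReal_mul_I_smul hχ ha hb t, map_add, map_smul, smul_eq_mul]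

end IsWeak2LocalStarDerivation

/-- A weak-2-local *-derivation satisfies `Δ(a + ib) = Δ(a) + iΔ(b) = Δ(a - ib)*` for all
self-adjoint `a, b`. -/
theorem weak2local_star_derivation_add_smul_I (Δ : A → A)
    (hΔ : IsWeak2LocalStarDerivation Δ) (a b : A) (ha : star a = a) (hb : star b = b) :
    Δ (a + Complex.I • b) = Δ a + Complex.I • Δ b ∧
    Δ (a + Complex.I • b) = star (Δ (a - Complex.I • b)) := by
  have h_add : Δ (a + I • b) = Δ a + I • Δ b := by
    simpa using hΔ.apply_add_ofReal_mul_I_smul ha hb 1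
  have h_sub : Δ (a - I • b) = Δ a - I • Δ b := by
    simpa [sub_eq_add_neg] using hΔ.apply_add_ofReal_mul_I_smul ha hb (-1)
  refine ⟨h_add, ?_⟩
  rw [h_add, h_sub, star_sub, star_smul, (hΔ.isSelfAdjoint_apply ha).star_eq,
    (hΔ.isSelfAdjoint_apply hb).star_eq, star_def, conj_I, neg_smul, sub_neg_eq_add]
end
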